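/- The polytope P = {(x,y,z) ∈ ℝ³ : 0 ≤ x ≤ 2/3, 0 ≤ y ≤ 2/3, 0 ≤ z ≤ 2/3, x+y ≥ 1/3, z ≥ x − 1/3, y+z ≤ 1} has exactly 11 vertices: (1/3,0,0), (0,1/3,0), (0,2/3,0), (1/3,2/3,0), (2/3,2/3,1/3), (2/3,0,1/3), (0,2/3,1/3), (1/3,0,2/3), (2/3,0,2/3), (2/3,1/3,2/3), (0,1/3,2/3). -/

import Mathlib

/-!
Each listed point is the unique maximiser over the polytope of the sum of the outer normals of
three constraints tight at it, hence an exposed point. Conversely the polytope lies in the convex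
hull of the listed points, so its extreme points are among them. Above each admissible `(x, y)`
its fibre is a vertical segment from the lower boundary (`z = 0` for `x ≤ 1/3`, `z = x - 1/3`
for `x ≥ 1/3`) to the upper boundary (`z = 2/3` for `y ≤ 1/3`, `z = 1 - y` for `y ≥ 1/3`), and
each of these four faces is swept out by segments joining two of its edges.
-/

/-- The polytope parametrizing the state space of H₁₁(19):
{0 ≤ x ≤ 2/3, 0 ≤ y ≤ 2/3, 0 ≤ z ≤ 2/3, x+y ≥ 1/3, z ≥ x − 1/3, y+z ≤ 1}. -/
def H11Poly : Set (ℝ × ℝ × ℝ) :=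
  {p | 0 ≤ p.1 ∧ p.1 ≤ 2/3 ∧ 0 ≤ p.2.1 ∧ p.2.1 ≤ 2/3 ∧ 0 ≤ p.2.2 ∧ p.2.2 ≤ 2/3 ∧
       1/3 ≤ p.1 + p.2.1 ∧ p.1 - 1/3 ≤ p.2.2 ∧ p.2.1 + p.2.2 ≤ 1}

open Set

theorem Convex.mem_of_smul_add_smul_eq {𝕜 E : Type*} [Field 𝕜] [LinearOrder 𝕜]
    [IsStrictOrderedRing 𝕜] [AddCommGroup E] [Module 𝕜 E] {C : Set E} (hC : Convex 𝕜 C)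
    {a b p : E} (ha : a ∈ C) (hb : b ∈ C) {s t : 𝕜} (hs : 0 ≤ s) (ht : 0 ≤ t)
    (hst : 0 < s + t) (h : s • a + t • b = (s + t) • p) : p ∈ C := by
  have hp : p = (s / (s + t)) • a + (t / (s + t)) • b := by
    rw [div_eq_inv_mul, div_eq_inv_mul, mul_smul, mul_smul, ← smul_add, h, smul_smul,
      inv_mul_cancel₀ hst.ne', one_smul]
  rw [hp]
  exact hC ha hb (div_nonneg hs hst.le) (div_nonneg ht hst.le) (by field_simp)

theorem Convex.mk_mem_of_weighted_sum_eq {C : Set (ℝ × ℝ × ℝ)} (hC : Convex ℝ C)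
    {x₁ y₁ z₁ x₂ y₂ z₂ x y z s t : ℝ} (h₁ : (x₁, y₁, z₁) ∈ C) (h₂ : (x₂, y₂, z₂) ∈ C)
    (hs : 0 ≤ s) (ht : 0 ≤ t) (hst : 0 < s + t) (hx : s * x₁ + t * x₂ = (s + t) * x)
    (hy : s * y₁ + t * y₂ = (s + t) * y) (hz : s * z₁ + t * z₂ = (s + t) * z) :
    (x, y, z) ∈ C :=
  hC.mem_of_smul_add_smul_eq h₁ h₂ hs ht hst (by simp [hx, hy, hz])

theorem Convex.mk_mem_of_le_of_le {C : Set (ℝ × ℝ × ℝ)} (hC : Convex ℝ C) {x y z₀ z z₁ : ℝ}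
    (h₀ : (x, y, z₀) ∈ C) (h₁ : (x, y, z₁) ∈ C) (hz₀ : z₀ ≤ z) (hz₁ : z ≤ z₁) :
    (x, y, z) ∈ C := by
  rcases hz₀.eq_or_lt with rfl | hlt
  · exact h₀
  · exact hC.mk_mem_of_weighted_sum_eq h₀ h₁ (s := z₁ - z) (t := z - z₀) (by linarith)
      (by linarith) (by linarith) (by ring) (by ring) (by ring)

def coordFunctional (a b c : ℝ) : StrongDual ℝ (ℝ × ℝ × ℝ) :=
  a • ContinuousLinearMap.fst ℝ ℝ (ℝ × ℝ) +
    b • (ContinuousLinearMap.fst ℝ ℝ ℝ).comp (ContinuousLinearMap.snd ℝ ℝ (ℝ × ℝ)) +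
    c • (ContinuousLinearMap.snd ℝ ℝ ℝ).comp (ContinuousLinearMap.snd ℝ ℝ (ℝ × ℝ))

@[simp]
theorem coordFunctional_apply (a b c x y z : ℝ) :
    coordFunctional a b c (x, y, z) = a * x + b * y + c * z := rfl

def H11Vertices : Set (ℝ × ℝ × ℝ) :=
  {(1/3, 0, 0), (0, 1/3, 0), (0, 2/3, 0), (1/3, 2/3, 0), (2/3, 2/3, 1/3),
   (2/3, 0, 1/3), (0, 2/3, 1/3), (1/3, 0, 2/3), (2/3, 0, 2/3),
   (2/3, 1/3, 2/3), (0, 1/3, 2/3)}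

theorem convex_H11Poly : Convex ℝ H11Poly := by
  rintro ⟨x₁, y₁, z₁⟩ ⟨h₁, h₂, h₃, h₄, h₅, h₆, h₇, h₈, h₉⟩ ⟨x₂, y₂, z₂⟩
    ⟨k₁, k₂, k₃, k₄, k₅, k₆, k₇, k₈, k₉⟩ a b ha hb hab
  simp only [Prod.smul_mk, Prod.mk_add_mk, smul_eq_mul] at *
  have hc {u v : ℝ} (hu : 0 ≤ u) (hv : 0 ≤ v) : 0 ≤ a * u + b * v :=
    add_nonneg (mul_nonneg ha hu) (mul_nonneg hb hv)
  refine ⟨?_, ?_, ?_, ?_, ?_, ?_, ?_, ?_, ?_⟩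
  · linarith [hc h₁ k₁]
  · linarith [hc (sub_nonneg.2 h₂) (sub_nonneg.2 k₂)]
  · linarith [hc h₃ k₃]
  · linarith [hc (sub_nonneg.2 h₄) (sub_nonneg.2 k₄)]
  · linarith [hc h₅ k₅]
  · linarith [hc (sub_nonneg.2 h₆) (sub_nonneg.2 k₆)]
  · linarith [hc (sub_nonneg.2 h₇) (sub_nonneg.2 k₇)]
  · linarith [hc (sub_nonneg.2 h₈) (sub_nonneg.2 k₈)]
  · linarith [hc (sub_nonneg.2 h₉) (sub_nonneg.2 k₉)]

theorem H11Vertices_subset_H11Poly : H11Vertices ⊆ H11Poly := by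
  intro v hv
  simp only [H11Vertices, mem_insert_iff, mem_singleton_iff] at hv
  rcases hv with rfl | rfl | rfl | rfl | rfl | rfl | rfl | rfl | rfl | rfl | rfl <;>
    norm_num [H11Poly]

theorem H11Vertices_subset_exposedPoints : H11Vertices ⊆ H11Poly.exposedPoints ℝ := by
  intro v hv
  refine ⟨H11Vertices_subset_H11Poly hv, ?_⟩
  simp only [H11Vertices, mem_insert_iff, mem_singleton_iff] at hv
  rcases hv with rfl | rfl | rfl | rfl | rfl | rfl | rfl | rfl | rfl | rfl | rfl
  on_goal 1 => use coordFunctional (-1) (-2) (-1)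
  on_goal 2 => use coordFunctional (-2) (-1) (-1)
  on_goal 3 => use coordFunctional (-1) 1 (-1)
  on_goal 4 => use coordFunctional 1 1 (-2)
  on_goal 5 => use coordFunctional 1 1 0
  on_goal 6 => use coordFunctional 2 (-1) (-1)
  on_goal 7 => use coordFunctional (-1) 2 1
  on_goal 8 => use coordFunctional (-1) (-2) 1
  on_goal 9 => use coordFunctional 1 (-1) 1
  on_goal 10 => use coordFunctional 1 1 2
  on_goal 11 => use coordFunctional (-1) 1 2
  all_goals
    rintro ⟨x, y, z⟩ ⟨hx₀, hx₁, hy₀, hy₁, hz₀, hz₁, hxy, hxz, hyz⟩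
    simp only [coordFunctional_apply, Prod.mk.injEq]
    exact ⟨by linarith, fun h => ⟨by linarith, by linarith, by linarith⟩⟩

theorem mem_convexHull_H11Vertices (p : ℝ × ℝ × ℝ)
    (hp : p ∈ H11Vertices := by norm_num [H11Vertices]) : p ∈ convexHull ℝ H11Vertices :=
  subset_convexHull ℝ _ hp

theorem mk_zero_mem_convexHull_H11Vertices {x y : ℝ} (hx₀ : 0 ≤ x) (hx₁ : x ≤ 1/3)
    (hxy : 1/3 ≤ x + y) (hy : y ≤ 2/3) : (x, y, 0) ∈ convexHull ℝ H11Vertices := by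
  have hK := convex_convexHull ℝ H11Vertices
  have hA : (x, 1/3 - x, 0) ∈ convexHull ℝ H11Vertices :=
    hK.mk_mem_of_weighted_sum_eq (mem_convexHull_H11Vertices (1/3, 0, 0))
      (mem_convexHull_H11Vertices (0, 1/3, 0)) (s := 3 * x) (t := 1 - 3 * x)
      (by linarith) (by linarith) (by linarith) (by ring) (by ring) (by ring)
  have hB : (x, 2/3, 0) ∈ convexHull ℝ H11Vertices :=
    hK.mk_mem_of_weighted_sum_eq (mem_convexHull_H11Vertices (1/3, 2/3, 0))
      (mem_convexHull_H11Vertices (0, 2/3, 0)) (s := 3 * x) (t := 1 - 3 * x)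
      (by linarith) (by linarith) (by linarith) (by ring) (by ring) (by ring)
  exact hK.mk_mem_of_weighted_sum_eq hA hB (s := 2/3 - y) (t := x + y - 1/3)
    (by linarith) (by linarith) (by linarith) (by ring) (by ring) (by ring)

theorem mk_sub_mem_convexHull_H11Vertices {x y : ℝ} (hx₀ : 1/3 ≤ x) (hx₁ : x ≤ 2/3)
    (hy₀ : 0 ≤ y) (hy₁ : y ≤ 2/3) : (x, y, x - 1/3) ∈ convexHull ℝ H11Vertices := by
  have hK := convex_convexHull ℝ H11Vertices
  have hA : (x, 0, x - 1/3) ∈ convexHull ℝ H11Vertices :=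
    hK.mk_mem_of_weighted_sum_eq (mem_convexHull_H11Vertices (1/3, 0, 0))
      (mem_convexHull_H11Vertices (2/3, 0, 1/3)) (s := 2 - 3 * x) (t := 3 * x - 1)
      (by linarith) (by linarith) (by linarith) (by ring) (by ring) (by ring)
  have hB : (x, 2/3, x - 1/3) ∈ convexHull ℝ H11Vertices :=
    hK.mk_mem_of_weighted_sum_eq (mem_convexHull_H11Vertices (1/3, 2/3, 0))
      (mem_convexHull_H11Vertices (2/3, 2/3, 1/3)) (s := 2 - 3 * x) (t := 3 * x - 1)
      (by linarith) (by linarith) (by linarith) (by ring) (by ring) (by ring)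
  exact hK.mk_mem_of_weighted_sum_eq hA hB (s := 2/3 - y) (t := y)
    (by linarith) (by linarith) (by linarith) (by ring) (by ring) (by ring)

theorem mk_two_thirds_mem_convexHull_H11Vertices {x y : ℝ} (hy₀ : 0 ≤ y) (hy₁ : y ≤ 1/3)
    (hxy : 1/3 ≤ x + y) (hx : x ≤ 2/3) : (x, y, 2/3) ∈ convexHull ℝ H11Vertices := by
  have hK := convex_convexHull ℝ H11Vertices
  have hA : (1/3 - y, y, 2/3) ∈ convexHull ℝ H11Vertices :=
    hK.mk_mem_of_weighted_sum_eq (mem_convexHull_H11Vertices (1/3, 0, 2/3))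
      (mem_convexHull_H11Vertices (0, 1/3, 2/3)) (s := 1 - 3 * y) (t := 3 * y)
      (by linarith) (by linarith) (by linarith) (by ring) (by ring) (by ring)
  have hB : (2/3, y, 2/3) ∈ convexHull ℝ H11Vertices :=
    hK.mk_mem_of_weighted_sum_eq (mem_convexHull_H11Vertices (2/3, 0, 2/3))
      (mem_convexHull_H11Vertices (2/3, 1/3, 2/3)) (s := 1 - 3 * y) (t := 3 * y)
      (by linarith) (by linarith) (by linarith) (by ring) (by ring) (by ring)
  exact hK.mk_mem_of_weighted_sum_eq hA hB (s := 2/3 - x) (t := x + y - 1/3)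
    (by linarith) (by linarith) (by linarith) (by ring) (by ring) (by ring)

theorem mk_one_sub_mem_convexHull_H11Vertices {x y : ℝ} (hy₀ : 1/3 ≤ y) (hy₁ : y ≤ 2/3)
    (hx₀ : 0 ≤ x) (hx₁ : x ≤ 2/3) : (x, y, 1 - y) ∈ convexHull ℝ H11Vertices := by
  have hK := convex_convexHull ℝ H11Vertices
  have hA : (0, y, 1 - y) ∈ convexHull ℝ H11Vertices :=
    hK.mk_mem_of_weighted_sum_eq (mem_convexHull_H11Vertices (0, 1/3, 2/3))
      (mem_convexHull_H11Vertices (0, 2/3, 1/3)) (s := 2 - 3 * y) (t := 3 * y - 1)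
      (by linarith) (by linarith) (by linarith) (by ring) (by ring) (by ring)
  have hB : (2/3, y, 1 - y) ∈ convexHull ℝ H11Vertices :=
    hK.mk_mem_of_weighted_sum_eq (mem_convexHull_H11Vertices (2/3, 1/3, 2/3))
      (mem_convexHull_H11Vertices (2/3, 2/3, 1/3)) (s := 2 - 3 * y) (t := 3 * y - 1)
      (by linarith) (by linarith) (by linarith) (by ring) (by ring) (by ring)
  exact hK.mk_mem_of_weighted_sum_eq hA hB (s := 2/3 - x) (t := x)
    (by linarith) (by linarith) (by linarith) (by ring) (by ring) (by ring)

theorem exists_le_mk_mem_convexHull_H11Vertices {x y z : ℝ} (hp : (x, y, z) ∈ H11Poly) :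
    ∃ z₀ ≤ z, (x, y, z₀) ∈ convexHull ℝ H11Vertices := by
  obtain ⟨hx₀, hx₁, hy₀, hy₁, hz₀, -, hxy, hxz, -⟩ := hp
  rcases le_total x (1/3) with hx | hx
  · exact ⟨0, hz₀, mk_zero_mem_convexHull_H11Vertices hx₀ hx hxy hy₁⟩
  · exact ⟨x - 1/3, hxz, mk_sub_mem_convexHull_H11Vertices hx hx₁ hy₀ hy₁⟩

theorem exists_ge_mk_mem_convexHull_H11Vertices {x y z : ℝ} (hp : (x, y, z) ∈ H11Poly) :
    ∃ z₁ ≥ z, (x, y, z₁) ∈ convexHull ℝ H11Vertices := by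
  obtain ⟨hx₀, hx₁, hy₀, hy₁, -, hz₁, hxy, -, hyz⟩ := hp
  rcases le_total y (1/3) with hy | hy
  · exact ⟨2/3, hz₁, mk_two_thirds_mem_convexHull_H11Vertices hy₀ hy hxy hx₁⟩
  · exact ⟨1 - y, by linarith, mk_one_sub_mem_convexHull_H11Vertices hy hy₁ hx₀ hx₁⟩

theorem H11Poly_eq_convexHull : H11Poly = convexHull ℝ H11Vertices := by
  refine subset_antisymm ?_ (convexHull_min H11Vertices_subset_H11Poly convex_H11Poly)
  rintro ⟨x, y, z⟩ hp
  obtain ⟨z₀, hz₀, h₀⟩ := exists_le_mk_mem_convexHull_H11Vertices hp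
  obtain ⟨z₁, hz₁, h₁⟩ := exists_ge_mk_mem_convexHull_H11Vertices hp
  exact (convex_convexHull ℝ _).mk_mem_of_le_of_le h₀ h₁ hz₀ hz₁

/-- The polytope H₁₁Poly has exactly 11 vertices (extreme points). -/
theorem H11Poly_extremePoints :
    Set.extremePoints ℝ H11Poly =
      {(1/3, 0, 0), (0, 1/3, 0), (0, 2/3, 0), (1/3, 2/3, 0), (2/3, 2/3, 1/3),
       (2/3, 0, 1/3), (0, 2/3, 1/3), (1/3, 0, 2/3), (2/3, 0, 2/3),
       (2/3, 1/3, 2/3), (0, 1/3, 2/3)} := by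
  show H11Poly.extremePoints ℝ = H11Vertices
  refine subset_antisymm ?_ (H11Vertices_subset_exposedPoints.trans
    exposedPoints_subset_extremePoints)
  rw [H11Poly_eq_convexHull]
  exact extremePoints_convexHull_subset
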